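/- With $\alpha > 0$ and the recursion $K_0(u)=u$, $K_\ell(u) = K_{\ell-1}(u)+\alpha^2(1+\alpha^2)^{\ell-1}\kappa_1\left(\frac{K_{\ell-1}(u)}{(1+\alpha^2)^{\ell-1}}\right)$, the expansion $K_\ell(1-t) = (1+\alpha^2)^\ell(1-t) + o(t)$ holds as $t \to 0^+$, for every $\ell \ge 0$. -/

import Mathlib

/-!
With Mathlib's conventions `arccos u = 0` and `√(1 - u²) = 0` for `u ≥ 1`, `κ₁` is the identity on
`[1, ∞)`, while on `(-1, 1)` its derivative `1 - arccos u / π` tends to `1` as `u → 1⁻`. Hence `κ₁`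
is differentiable at `1` with `κ₁ 1 = κ₁' 1 = 1`, i.e. `κ₁ u = u + o(u - 1)`. By induction on `ℓ`,
`K ℓ (1 - t) / (1 + α²)^ℓ = 1 - t + o(t)`, so `κ₁` of it is again `1 - t + o(t)`, and the recursion
multiplies the leading term by `1 + α²`.
-/

open Real Asymptotics

noncomputable def kappa1 (u : ℝ) : ℝ := (u * (π - Real.arccos u) + Real.sqrt (1 - u ^ 2)) / π

open Filter Set Topology

theorem hasDerivAt_kappa1 {x : ℝ} (hx₁ : -1 < x) (hx₂ : x < 1) :
    HasDerivAt kappa1 (1 - arccos x / π) x := by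
  have hsq : 0 < 1 - x ^ 2 := by nlinarith
  have hs : sqrt (1 - x ^ 2) ≠ 0 := (sqrt_pos.2 hsq).ne'
  refine (((hasDerivAt_id x).mul ((hasDerivAt_const x π).sub
    (hasDerivAt_arccos hx₁.ne' hx₂.ne))).add ((hasDerivAt_sqrt hsq.ne').comp x
    ((hasDerivAt_const x 1).sub (hasDerivAt_pow 2 x)))).div_const π |>.congr_deriv ?_
  simp only [Pi.sub_apply, id]
  field_simp
  ring

theorem kappa1_of_one_le {u : ℝ} (hu : 1 ≤ u) : kappa1 u = u := by
  rw [kappa1, arccos_eq_zero.2 hu, sqrt_eq_zero'.2 (by nlinarith)]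
  field_simp [pi_ne_zero]
  ring

theorem continuous_kappa1 : Continuous kappa1 := by
  unfold kappa1
  fun_prop

theorem hasDerivWithinAt_kappa1_Iic_one : HasDerivWithinAt kappa1 1 (Iic 1) 1 := by
  have hderiv : ∀ x ∈ Ioo (-1 : ℝ) 1, HasDerivAt kappa1 (1 - arccos x / π) x :=
    fun x hx => hasDerivAt_kappa1 hx.1 hx.2
  apply hasDerivWithinAt_Iic_of_tendsto_deriv (s := Ioo (-1) 1)
    (fun x hx => (hderiv x hx).differentiableAt.differentiableWithinAt)
    continuous_kappa1.continuousWithinAt (Ioo_mem_nhdsLT (by norm_num))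
  have hlim : Tendsto (fun x => 1 - arccos x / π) (𝓝[<] 1) (𝓝 1) := by
    simpa [arccos_one] using
      ((continuous_arccos.tendsto 1).div_const π).const_sub 1 |>.mono_left nhdsWithin_le_nhds
  refine hlim.congr' ?_
  filter_upwards [Ioo_mem_nhdsLT (show (-1 : ℝ) < 1 by norm_num)] with x hx
  exact (hderiv x hx).deriv.symm

theorem hasDerivAt_kappa1_one : HasDerivAt kappa1 1 1 := by
  have hright : HasDerivWithinAt kappa1 1 (Ici 1) 1 :=
    (hasDerivWithinAt_id 1 _).congr (fun u hu => kappa1_of_one_le hu) (kappa1_of_one_le le_rfl)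
  simpa [Iic_union_Ici] using hasDerivWithinAt_kappa1_Iic_one.union hright

theorem HasDerivAt.isLittleO_comp_of_isBigO {𝕜 F G α : Type*} [NontriviallyNormedField 𝕜]
    [NormedAddCommGroup F] [NormedSpace 𝕜 F] [NormedAddCommGroup G] {φ : 𝕜 → F} {φ' : F}
    {a : 𝕜} (hφ : HasDerivAt φ φ' a) {l : Filter α} {g : α → 𝕜} {h : α → G}
    (hg : (fun t => g t - a) =O[l] h) (hh : Tendsto h l (𝓝 0)) :
    (fun t => φ (g t) - φ a - (g t - a) • φ') =o[l] h := by
  have hga : Tendsto g l (𝓝 a) := tendsto_sub_nhds_zero_iff.1 (hg.trans_tendsto hh)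
  exact ((hasDerivAt_iff_isLittleO.1 hφ).comp_tendsto hga).trans_isBigO hg

theorem isLittleO_kappa1_comp_sub_self {α : Type*} {l : Filter α} {g h : α → ℝ}
    (hg : (fun t => g t - 1) =O[l] h) (hh : Tendsto h l (𝓝 0)) :
    (fun t => kappa1 (g t) - g t) =o[l] h := by
  refine (hasDerivAt_kappa1_one.isLittleO_comp_of_isBigO hg hh).congr_left fun t => ?_
  rw [kappa1_of_one_le le_rfl, smul_eq_mul]
  ring

theorem K_ell_expansion_near_one_general (α : ℝ)
    (K : ℕ → ℝ → ℝ)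
    (hK0 : ∀ u, K 0 u = u)
    (hKrec : ∀ ℓ u, K (ℓ + 1) u =
      K ℓ u + α ^ 2 * (1 + α ^ 2) ^ ℓ * kappa1 (K ℓ u / (1 + α ^ 2) ^ ℓ)) :
    ∀ ℓ : ℕ, (fun t : ℝ => K ℓ (1 - t) - (1 + α ^ 2) ^ ℓ * (1 - t))
      =o[nhdsWithin 0 (Set.Ioi 0)] (fun t : ℝ => t) := by
  intro ℓ
  induction ℓ with
  | zero => simp [hK0]
  | succ n ih =>
    set P := (1 + α ^ 2) ^ n
    have hP : P ≠ 0 := by positivity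
    have hg : (fun t => K n (1 - t) / P - (1 - t)) =o[𝓝[>] 0] (fun t => t) :=
      (ih.const_mul_left P⁻¹).congr_left fun t => by field_simp
    have hg₁ : (fun t => K n (1 - t) / P - 1) =O[𝓝[>] 0] (fun t => t) :=
      (hg.isBigO.sub (isBigO_refl _ _)).congr_left fun t => by ring
    have hκ := isLittleO_kappa1_comp_sub_self hg₁ (tendsto_nhdsWithin_of_tendsto_nhds tendsto_id)
    refine ((ih.add (hκ.const_mul_left (α ^ 2 * P))).add
      (hg.const_mul_left (α ^ 2 * P))).congr_left fun t => ?_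
    rw [hKrec, pow_succ]
    field_simp
    ring

theorem K_ell_expansion_near_one (α : ℝ) (hα : 0 < α)
    (K : ℕ → ℝ → ℝ)
    (hK0 : ∀ u, K 0 u = u)
    (hKrec : ∀ ℓ u, K (ℓ + 1) u =
      K ℓ u + α ^ 2 * (1 + α ^ 2) ^ ℓ * kappa1 (K ℓ u / (1 + α ^ 2) ^ ℓ)) :
    ∀ ℓ : ℕ, (fun t : ℝ => K ℓ (1 - t) - (1 + α ^ 2) ^ ℓ * (1 - t))
      =o[nhdsWithin 0 (Set.Ioi 0)] (fun t : ℝ => t) :=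
  K_ell_expansion_near_one_general α K hK0 hKrec
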